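/- arXiv:2411.07851 — 9 statements merged into one kernel-verified Lean document; each statement's English description precedes it below -/
import Mathlib

section
/- If a choice function C : 2^S → 2^S is path-independent, then it is substitutable: for all A ⊆ S, all s ∈ C(A), and all s' ∈ A with s' ≠ s, we have s ∈ C(A \ {s'}). -/
theorem pathIndependent_substitutable {S : Type*} [Fintype S] [DecidableEq S]
    (C : Finset S → Finset S) (hC : ∀ A, C A ⊆ A)
    (hpi : ∀ A B, C (A ∪ B) = C (C A ∪ B)) :
    ∀ A : Finset S, ∀ s ∈ C A, ∀ s' ∈ A, s' ≠ s → s ∈ C (A \ {s'}) := by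
  intro A s hs s' hs' hne
  have hA : A = (A \ {s'}) ∪ {s'} := by
    ext x
    simp only [Finset.mem_union, Finset.mem_sdiff, Finset.mem_singleton]
    constructor
    · intro hx; by_cases h : x = s' <;> tauto
    · rintro (⟨h, _⟩ | h) <;> [exact h; exact h ▸ hs']
  have h2 : s ∈ C (C (A \ {s'}) ∪ {s'}) := by
    rw [← hpi, ← hA]; exact hs
  have h3 := hC _ h2
  rcases Finset.mem_union.mp h3 with h | h
  · exact h
  · exact absurd (Finset.mem_singleton.mp h) (Ne.symm hne)
end

section
/- A choice function C : 2^S → 2^S on a finite set S is path-independent if and only if it is both substitutable and consistent. (Aizerman–Malishevski characterization.) -/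
theorem aizerman_malishevski {S : Type*} [Fintype S] [DecidableEq S]
    (C : Finset S → Finset S) (hC : ∀ A, C A ⊆ A) :
    (∀ A B, C (A ∪ B) = C (C A ∪ B)) ↔
      ((∀ A : Finset S, ∀ s ∈ C A, ∀ s' ∈ A, s' ≠ s → s ∈ C (A \ {s'})) ∧
        (∀ A B : Finset S, C A ⊆ B → B ⊆ A → C B = C A)) := by
  constructor
  · intro hPI
    constructor
    · intro A s hs s' hs' hne
      have hsub : {s'} ⊆ A := Finset.singleton_subset_iff.mpr hs'
      have hA : (A \ {s'}) ∪ {s'} = A := Finset.sdiff_union_of_subset hsub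
      have h1 : C A = C (C (A \ {s'}) ∪ {s'}) := by
        have := hPI (A \ {s'}) {s'}
        rwa [hA] at this
      have hs2 : s ∈ C (A \ {s'}) ∪ {s'} := hC _ (h1 ▸ hs)
      rcases Finset.mem_union.mp hs2 with h | h
      · exact h
      · exact absurd (Finset.mem_singleton.mp h) (Ne.symm hne)
    · intro A B h1 h2
      have hA : A ∪ B = A := Finset.union_eq_left.mpr h2
      have hB : C A ∪ B = B := Finset.union_eq_right.mpr h1
      calc C B = C (C A ∪ B) := by rw [hB]
        _ = C (A ∪ B) := (hPI A B).symm
        _ = C A := by rw [hA]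
  · rintro ⟨hsub, hcons⟩ A B
    -- Chernoff via iterated substitutability
    have chern : ∀ (D A : Finset S), ∀ s ∈ C A, s ∉ D → s ∈ C (A \ D) := by
      intro D
      induction D using Finset.induction_on with
      | empty => intro A s hs _; simpa using hs
      | @insert a D ha ih =>
        intro A s hs hsD
        have hs1 : s ∉ D := fun h => hsD (Finset.mem_insert_of_mem h)
        have hsa : s ≠ a := fun h => hsD (h ▸ Finset.mem_insert_self a D)
        have h2 : s ∈ C (A \ D) := ih A s hs hs1
        by_cases haD : a ∈ A \ D
        · have := hsub (A \ D) s h2 a haD (Ne.symm hsa)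
          have heq : (A \ D) \ {a} = A \ insert a D := by
            ext x; simp [Finset.mem_sdiff, Finset.mem_insert]; tauto
          rwa [heq] at this
        · have heq : A \ insert a D = A \ D := by
            ext x; simp only [Finset.mem_sdiff, Finset.mem_insert] at *
            constructor
            · rintro ⟨hx, hx2⟩; exact ⟨hx, fun h => hx2 (Or.inr h)⟩
            · rintro ⟨hx, hx2⟩
              refine ⟨hx, ?_⟩
              rintro (rfl | h)
              · exact haD ⟨hx, hx2⟩
              · exact hx2 h
          rw [heq]; exact h2
    have hss : C (A ∪ B) ⊆ C A ∪ B := by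
      intro x hx
      by_cases hxB : x ∈ B
      · exact Finset.mem_union_right _ hxB
      · have hxA : x ∈ A := by
          rcases Finset.mem_union.mp (hC _ hx) with h | h
          · exact h
          · exact absurd h hxB
        have hxD : x ∉ B \ A := fun h => hxB (Finset.mem_sdiff.mp h).1
        have heq : (A ∪ B) \ (B \ A) = A := by
          ext y; simp [Finset.mem_sdiff, Finset.mem_union]; tauto
        have := chern (B \ A) (A ∪ B) x hx hxD
        rw [heq] at this
        exact Finset.mem_union_left _ this
    have hBA : C A ∪ B ⊆ A ∪ B := Finset.union_subset_union (hC A) (le_refl B)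
    exact (hcons (A ∪ B) (C A ∪ B) hss hBA).symm
end

section
/- Given a path-independent choice function C, the Blair relation ⪰^B defined on 2^S by A ⪰^B B iff A = C(A ∪ B) is a partial order on the range of C, i.e., it is reflexive on sets A with C(A) = A, antisymmetric, and transitive. -/
theorem blair_partialOrder {S : Type*} [Fintype S] [DecidableEq S]
    (C : Finset S → Finset S) (hC : ∀ A, C A ⊆ A)
    (hpi : ∀ A B, C (A ∪ B) = C (C A ∪ B)) :
    (∀ A : Finset S, C A = A → A = C (A ∪ A)) ∧
      (∀ A B : Finset S, A = C (A ∪ B) → B = C (B ∪ A) → A = B) ∧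
      (∀ A B D : Finset S, A = C (A ∪ B) → B = C (B ∪ D) → A = C (A ∪ D)) := by
  refine ⟨fun A hA => by rw [Finset.union_self, hA], fun A B hAB hBA => by
    rw [hAB, Finset.union_comm, ← hBA], fun A B D hAB hBD => ?_⟩
  have key : C (A ∪ B ∪ D) = A := by
    rw [Finset.union_assoc, Finset.union_comm A (B ∪ D), hpi, ← hBD,
      Finset.union_comm B A, ← hAB]
  have key2 : C (A ∪ B ∪ D) = C (A ∪ D) := by rw [hpi (A ∪ B) D, ← hAB]
  rw [← key2, key]
end

section
/- If C is a path-independent choice function and A ⪰^B B and B ⪰^B D under the Blair relation, then A ⪰^B D (transitivity of the Blair relation). -/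
theorem blair_trans {S : Type*} [Fintype S] [DecidableEq S]
    (C : Finset S → Finset S) (hC : ∀ A, C A ⊆ A)
    (hpi : ∀ A B, C (A ∪ B) = C (C A ∪ B))
    (A B D : Finset S) (hAB : A = C (A ∪ B)) (hBD : B = C (B ∪ D)) :
    A = C (A ∪ D) := by
  have h1 : C (A ∪ B ∪ D) = C (A ∪ D) := by
    rw [hpi (A ∪ B) D, ← hAB]
  have h2 : C (A ∪ B ∪ D) = A := by
    have : A ∪ B ∪ D = B ∪ D ∪ A := by
      ext x; simp [or_comm, or_left_comm]
    rw [this, hpi (B ∪ D) A, ← hBD]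
    have : B ∪ A = A ∪ B := Finset.union_comm _ _
    rw [this, ← hAB]
  rw [← h1, h2]
end

section
/- Let C be a path-independent choice function, let μ', μ ⊆ S with μ' ⪰^B μ (Blair order), and let s ∉ μ'. If s ∈ C(μ' ∪ {s}), then s ∈ C(μ' ∪ μ ∪ {s}). -/
theorem blair_claim_extend {S : Type*} [Fintype S] [DecidableEq S]
    (C : Finset S → Finset S) (hC : ∀ A, C A ⊆ A)
    (hpi : ∀ A B, C (A ∪ B) = C (C A ∪ B))
    (μ' μ : Finset S) (hB : μ' = C (μ' ∪ μ)) (s : S) (hs : s ∉ μ')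
    (hch : s ∈ C (μ' ∪ {s})) :
    s ∈ C (μ' ∪ μ ∪ {s}) := by
  have h := hpi (μ' ∪ μ) {s}
  rw [← hB] at h
  rw [h]
  exact hch
end

section
/- A matching μ for a dynamic problem is dynamically stable if and only if it is stable for the related static problem obtained by replacing each school's priority by its derived priority (which ranks all teachers matched to the school in the previous period above all other teachers, preserving relative orders within each group). -/
/-- The derived priority: teachers previously matched to `s` come first (ordered
by `gt s`), followed by all other teachers (ordered by `gt s`). -/
def derPriority {I S : Type*} (gt : S → I → I → Prop) (μpS : S → Finset I)
    (s : S) (i j : I) : Prop :=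
  (i ∈ μpS s ∧ j ∉ μpS s) ∨ (i ∈ μpS s ∧ j ∈ μpS s ∧ gt s i j) ∨
    (i ∉ μpS s ∧ j ∉ μpS s ∧ gt s i j)

theorem dynamicStable_iff_staticStable
    {I S : Type*} [Fintype I] [Fintype S] [DecidableEq I] [DecidableEq S]
    (C : I → Finset S → Finset S)
    (hC : ∀ i A, C i A ⊆ A)
    (hpi : ∀ i A B, C i (A ∪ B) = C i (C i A ∪ B))
    (gt : S → I → I → Prop)
    (hirr : ∀ s i, ¬ gt s i i)
    (htrans : ∀ s i j k, gt s i j → gt s j k → gt s i k)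
    (htotal : ∀ s i j, i ≠ j → gt s i j ∨ gt s j i)
    (q : S → ℕ)
    -- the previous-period matching μ⁻
    (μpI : I → Finset S) (μpS : S → Finset I)
    (hmatchp : ∀ i s, i ∈ μpS s ↔ s ∈ μpI i)
    (hquotap : ∀ s, (μpS s).card ≤ q s)
    (hIRp : ∀ i, C i (μpI i) = μpI i)
    -- the current matching μ
    (μI : I → Finset S) (μS : S → Finset I)
    (hmatch : ∀ i s, i ∈ μS s ↔ s ∈ μI i)
    (hquota : ∀ s, (μS s).card ≤ q s) :
    -- dynamic stability at the dynamic problem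
    ((∀ i, C i (μI i) = μI i) ∧
      (∀ i, μpI i ≠ ∅ → μI i = C i (μI i ∪ μpI i)) ∧
      (∀ i s, s ∉ μI i → s ∈ C i (μI i ∪ {s}) → (μS s).card = q s) ∧
      ¬ ∃ i s j, s ∉ μI i ∧ s ∈ C i (μI i ∪ {s}) ∧ j ∈ μS s ∧ j ∉ μpS s ∧ gt s i j)
    ↔
    -- static stability at the related problem with derived priorities
    ((∀ i, C i (μI i) = μI i) ∧
      (∀ i s, s ∉ μI i → s ∈ C i (μI i ∪ {s}) → (μS s).card = q s) ∧
      ¬ ∃ i s j, s ∉ μI i ∧ s ∈ C i (μI i ∪ {s}) ∧ j ∈ μS s ∧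
        derPriority gt μpS s i j) := by
  have outcast : ∀ i (A B : Finset S), C i A ⊆ B → B ⊆ A → C i B = C i A := by
    intro i A B h1 h2
    have h := hpi i A B
    rw [Finset.union_eq_left.2 h2, Finset.union_eq_right.2 h1] at h
    exact h.symm
  constructor
  · rintro ⟨hIR, hDR, hNW, hNC⟩
    refine ⟨hIR, hNW, ?_⟩
    rintro ⟨i, s, j, hs1, hs2, hj, hd⟩
    have hkey : i ∉ μpS s := by
      intro hi
      have hsp : s ∈ μpI i := (hmatchp i s).1 hi
      have hne : μpI i ≠ ∅ := fun h => by simp [h] at hsp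
      have hDRi := hDR i hne
      have h1 : μI i ∪ μpI i ∪ {s} = μI i ∪ μpI i := by
        rw [Finset.union_eq_left]
        simp only [Finset.singleton_subset_iff, Finset.mem_union]
        exact Or.inr hsp
      have h2 := hpi i (μI i ∪ μpI i) {s}
      rw [h1, ← hDRi] at h2
      rw [← h2] at hs2
      exact hs1 hs2
    rcases hd with ⟨hi, _⟩ | ⟨hi, _⟩ | ⟨_, hjn, hgt⟩
    · exact hkey hi
    · exact hkey hi
    · exact hNC ⟨i, s, j, hs1, hs2, hj, hjn, hgt⟩
  · rintro ⟨hIR, hNW, hNC⟩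
    refine ⟨hIR, ?_, hNW, ?_⟩
    · intro i _
      have hnodes : ∀ s ∈ μpI i, s ∉ μI i → s ∉ C i (μI i ∪ {s}) := by
        intro s hsp hsn hsc
        have hq : (μS s).card = q s := hNW i s hsn hsc
        have hips : i ∈ μpS s := (hmatchp i s).2 hsp
        have hins : i ∉ μS s := fun h => hsn ((hmatch i s).1 h)
        have hsub : ¬ μS s ⊆ μpS s := by
          intro hsub
          have h1 : insert i (μS s) ⊆ μpS s := Finset.insert_subset hips hsub
          have h2 := Finset.card_le_card h1
          rw [Finset.card_insert_of_notMem hins, hq] at h2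
          have := hquotap s
          omega
        obtain ⟨j, hj1, hj2⟩ := Finset.not_subset.1 hsub
        exact hNC ⟨i, s, j, hsn, hsc, hj1, Or.inl ⟨hips, hj2⟩⟩
      have hind : ∀ T : Finset S, (∀ s ∈ T, s ∉ μI i → s ∉ C i (μI i ∪ {s})) →
          C i (μI i ∪ T) = μI i := by
        intro T
        induction T using Finset.induction_on with
        | empty => intro _; simpa using hIR i
        | @insert s T hsT ih =>
          intro hT
          have ihv := ih (fun t ht h => hT t (Finset.mem_insert_of_mem ht) h)
          have h1 : μI i ∪ insert s T = (μI i ∪ T) ∪ {s} := by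
            ext x
            simp only [Finset.mem_union, Finset.mem_insert, Finset.mem_singleton]
            tauto
          rw [h1, hpi i (μI i ∪ T) {s}, ihv]
          by_cases hs : s ∈ μI i
          · have h2 : μI i ∪ {s} = μI i := by
              rw [Finset.union_eq_left]; simpa
            rw [h2, hIR i]
          · have hns := hT s (Finset.mem_insert_self s T) hs
            have hsubA : C i (μI i ∪ {s}) ⊆ μI i := by
              intro x hx
              have hx2 := hC i (μI i ∪ {s}) hx
              rcases Finset.mem_union.1 hx2 with h | h
              · exact h
              · rw [Finset.mem_singleton] at h; subst h; exact absurd hx hns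
            have h3 := outcast i (μI i ∪ {s}) (μI i) hsubA Finset.subset_union_left
            rw [← h3]; exact hIR i
      exact (hind (μpI i) hnodes).symm
    · rintro ⟨i, s, j, h1, h2, h3, h4, h5⟩
      by_cases hi : i ∈ μpS s
      · exact hNC ⟨i, s, j, h1, h2, h3, Or.inl ⟨hi, h4⟩⟩
      · exact hNC ⟨i, s, j, h1, h2, h3, Or.inr (Or.inr ⟨hi, h4, h5⟩)⟩
end

section
/- For every dynamic problem in which teachers have path-independent choice functions, a dynamically stable matching exists. -/
private lemma reject_lemma {S : Type*} [DecidableEq S] (f : Finset S → Finset S)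
    (hsub : ∀ A, f A ⊆ A) (hpi : ∀ A B, f (A ∪ B) = f (f A ∪ B))
    (A : Finset S) (x : S) (hx : x ∉ f (A ∪ {x})) : f (A ∪ {x}) = f A := by
  have h1 : f (A ∪ {x}) ⊆ A := by
    intro y hy
    have hy' := hsub _ hy
    rcases Finset.mem_union.1 hy' with h | h
    · exact h
    · exact absurd hy (by simpa [Finset.mem_singleton.1 h] using hx)
  have h2 : (A ∪ {x}) ∪ A = A ∪ {x} := by
    ext y; simp [or_comm, or_assoc, or_left_comm]
  calc f (A ∪ {x}) = f ((A ∪ {x}) ∪ A) := by rw [h2]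
    _ = f (f (A ∪ {x}) ∪ A) := hpi _ _
    _ = f A := by rw [Finset.union_eq_right.2 h1]

private lemma absorb_lemma {S : Type*} [DecidableEq S] (f : Finset S → Finset S)
    (hsub : ∀ A, f A ⊆ A) (hpi : ∀ A B, f (A ∪ B) = f (f A ∪ B))
    (A B : Finset S) (hA : f A = A)
    (hB : ∀ x ∈ B, x ∉ A → x ∉ f (A ∪ {x})) : f (A ∪ B) = A := by
  induction B using Finset.induction_on with
  | empty => simpa using hA
  | @insert x B hxB ih =>
    have ih' := ih (fun y hy => hB y (Finset.mem_insert_of_mem hy))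
    have hstep : A ∪ insert x B = (A ∪ B) ∪ {x} := by
      ext y; simp [or_comm, or_assoc, or_left_comm]
    rw [hstep, hpi, ih']
    by_cases hxA : x ∈ A
    · rw [Finset.union_eq_left.2 (by simp [hxA])]; exact hA
    · rw [reject_lemma f hsub hpi A x (hB x (Finset.mem_insert_self x B) hxA)]
      exact hA

theorem exists_dynamicallyStable
    {I S : Type*} [Fintype I] [Fintype S] [DecidableEq I] [DecidableEq S]
    (C : I → Finset S → Finset S)
    (hC : ∀ i A, C i A ⊆ A)
    (hpi : ∀ i A B, C i (A ∪ B) = C i (C i A ∪ B))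
    (gt : S → I → I → Prop)
    (hirr : ∀ s i, ¬ gt s i i)
    (htrans : ∀ s i j k, gt s i j → gt s j k → gt s i k)
    (htotal : ∀ s i j, i ≠ j → gt s i j ∨ gt s j i)
    (q : S → ℕ)
    -- the previous-period matching μ⁻
    (μpI : I → Finset S) (μpS : S → Finset I)
    (hmatchp : ∀ i s, i ∈ μpS s ↔ s ∈ μpI i)
    (hquotap : ∀ s, (μpS s).card ≤ q s)
    (hIRp : ∀ i, C i (μpI i) = μpI i)
    -- classical fact: static stable matchings exist for any strict priority profile
    (hstatic : ∀ P : S → I → I → Prop,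
      (∀ s i, ¬ P s i i) → (∀ s i j k, P s i j → P s j k → P s i k) →
      (∀ s i j, i ≠ j → P s i j ∨ P s j i) →
      ∃ (μI : I → Finset S) (μS : S → Finset I),
        (∀ i s, i ∈ μS s ↔ s ∈ μI i) ∧ (∀ s, (μS s).card ≤ q s) ∧
        (∀ i, C i (μI i) = μI i) ∧
        (∀ i s, s ∉ μI i → s ∈ C i (μI i ∪ {s}) → (μS s).card = q s) ∧
        ¬ ∃ i s j, s ∉ μI i ∧ s ∈ C i (μI i ∪ {s}) ∧ j ∈ μS s ∧ P s i j) :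
    -- a dynamically stable matching exists
    ∃ (μI : I → Finset S) (μS : S → Finset I),
      (∀ i s, i ∈ μS s ↔ s ∈ μI i) ∧ (∀ s, (μS s).card ≤ q s) ∧
      (∀ i, C i (μI i) = μI i) ∧
      (∀ i, μpI i ≠ ∅ → μI i = C i (μI i ∪ μpI i)) ∧
      (∀ i s, s ∉ μI i → s ∈ C i (μI i ∪ {s}) → (μS s).card = q s) ∧
      ¬ ∃ i s j, s ∉ μI i ∧ s ∈ C i (μI i ∪ {s}) ∧ j ∈ μS s ∧ j ∉ μpS s ∧
        gt s i j := by
  -- Derived priorities: previously matched teachers first, then by gt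
  set P : S → I → I → Prop := fun s i j =>
    (i ∈ μpS s ∧ j ∉ μpS s) ∨ ((i ∈ μpS s ↔ j ∈ μpS s) ∧ gt s i j) with hP
  have hPirr : ∀ s i, ¬ P s i i := by
    intro s i h
    rcases h with ⟨h1, h2⟩ | ⟨_, h2⟩
    · exact h2 h1
    · exact hirr s i h2
  have hPtrans : ∀ s i j k, P s i j → P s j k → P s i k := by
    intro s i j k hij hjk
    rcases hij with ⟨hi, hj⟩ | ⟨hij, gij⟩ <;> rcases hjk with ⟨hj', hk⟩ | ⟨hjk, gjk⟩
    · exact absurd hj' hj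
    · exact Or.inl ⟨hi, fun hk => hj (hjk.2 hk)⟩
    · exact Or.inl ⟨hij.2 hj', hk⟩
    · exact Or.inr ⟨hij.trans hjk, htrans s i j k gij gjk⟩
  have hPtotal : ∀ s i j, i ≠ j → P s i j ∨ P s j i := by
    intro s i j hne
    by_cases hi : i ∈ μpS s <;> by_cases hj : j ∈ μpS s
    · rcases htotal s i j hne with h | h
      · exact Or.inl (Or.inr ⟨by simp [hi, hj], h⟩)
      · exact Or.inr (Or.inr ⟨by simp [hi, hj], h⟩)
    · exact Or.inl (Or.inl ⟨hi, hj⟩)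
    · exact Or.inr (Or.inl ⟨hj, hi⟩)
    · rcases htotal s i j hne with h | h
      · exact Or.inl (Or.inr ⟨by simp [hi, hj], h⟩)
      · exact Or.inr (Or.inr ⟨by simp [hi, hj], h⟩)
  obtain ⟨μI, μS, hmatch, hquota, hIR, hnw, hnb⟩ := hstatic P hPirr hPtrans hPtotal
  refine ⟨μI, μS, hmatch, hquota, hIR, ?_, hnw, ?_⟩
  · -- dynamic rationality
    intro i _
    refine (absorb_lemma (C i) (hC i) (hpi i) (μI i) (μpI i) (hIR i) ?_).symm
    intro s hsB hsA hsC
    -- s ∈ μpI i, s ∉ μI i, but s chosen: contradiction with stability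
    have hfull : (μS s).card = q s := hnw i s hsA hsC
    have hi : i ∈ μpS s := (hmatchp i s).2 hsB
    have hsub : μS s ⊆ μpS s := by
      intro j hj
      by_contra hjp
      exact hnb ⟨i, s, j, hsA, hsC, hj, Or.inl ⟨hi, hjp⟩⟩
    have heq : μS s = μpS s :=
      Finset.eq_of_subset_of_card_le hsub (by rw [hfull]; exact hquotap s)
    have : i ∈ μS s := heq ▸ hi
    exact hsA ((hmatch i s).1 this)
  · -- no justified claim
    rintro ⟨i, s, j, hsA, hsC, hj, hjp, hgt⟩
    by_cases hi : i ∈ μpS s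
    · exact hnb ⟨i, s, j, hsA, hsC, hj, Or.inl ⟨hi, hjp⟩⟩
    · exact hnb ⟨i, s, j, hsA, hsC, hj, Or.inr ⟨by simp [hi, hjp], hgt⟩⟩
end

section
/- Suppose a matching μ is individually rational and non-wasteful, and eliminates all claims with respect to the derived priorities ≫_s. Then μ is dynamically rational: for every teacher i with μ⁻(i) ≠ ∅, μ(i) ⪰^B_i μ⁻(i). -/
theorem staticStable_derived_implies_dynamicallyRational
    {I S : Type*} [Fintype I] [Fintype S] [DecidableEq I] [DecidableEq S]
    (C : I → Finset S → Finset S)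
    (hC : ∀ i A, C i A ⊆ A)
    (hpi : ∀ i A B, C i (A ∪ B) = C i (C i A ∪ B))
    (gt : S → I → I → Prop)
    (q : S → ℕ)
    -- the previous-period matching μ⁻
    (μpI : I → Finset S) (μpS : S → Finset I)
    (hmatchp : ∀ i s, i ∈ μpS s ↔ s ∈ μpI i)
    (hquotap : ∀ s, (μpS s).card ≤ q s)
    (hIRp : ∀ i, C i (μpI i) = μpI i)
    -- the current matching μ
    (μI : I → Finset S) (μS : S → Finset I)
    (hmatch : ∀ i s, i ∈ μS s ↔ s ∈ μI i)
    (hquota : ∀ s, (μS s).card ≤ q s)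
    -- μ is individually rational, non-wasteful, with no claims w.r.t. ≫
    (hIR : ∀ i, C i (μI i) = μI i)
    (hnw : ∀ i s, s ∉ μI i → s ∈ C i (μI i ∪ {s}) → (μS s).card = q s)
    (hnoclaim : ¬ ∃ i s j, s ∉ μI i ∧ s ∈ C i (μI i ∪ {s}) ∧ j ∈ μS s ∧
      derPriority gt μpS s i j) :
    -- μ is dynamically rational
    ∀ i, μpI i ≠ ∅ → μI i = C i (μI i ∪ μpI i) := by
  intro i _
  have key : ∀ s ∈ μpI i, C i (μI i ∪ {s}) = μI i := by
    intro s hs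
    by_cases hsi : s ∈ μI i
    · rw [Finset.union_eq_left.2 (Finset.singleton_subset_iff.2 hsi), hIR]
    · have hrej : s ∉ C i (μI i ∪ {s}) := by
        intro hmem
        have hiS : i ∈ μpS s := (hmatchp i s).2 hs
        have hiNot : i ∉ μS s := fun h => hsi ((hmatch i s).1 h)
        have hcard : (μS s).card = q s := hnw i s hsi hmem
        have hex : ∃ j ∈ μS s, j ∉ μpS s := by
          by_contra h
          push_neg at h
          have hsub : μS s ⊆ (μpS s).erase i := fun j hj =>
            Finset.mem_erase.2 ⟨fun e => hiNot (e ▸ hj), h j hj⟩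
          have hle := Finset.card_le_card hsub
          rw [Finset.card_erase_of_mem hiS] at hle
          have hpos : 0 < (μpS s).card := Finset.card_pos.2 ⟨i, hiS⟩
          have := hquotap s
          omega
        obtain ⟨j, hj, hjn⟩ := hex
        exact hnoclaim ⟨i, s, j, hsi, hmem, hj, Or.inl ⟨hiS, hjn⟩⟩
      have h1 : C i (μI i ∪ {s}) ⊆ μI i := by
        intro x hx
        rcases Finset.mem_union.1 (hC i _ hx) with h | h
        · exact h
        · exact absurd hx (Finset.mem_singleton.1 h ▸ hrej)
      have h2 : C i (μI i ∪ {s}) ∪ μI i = μI i := Finset.union_eq_right.2 h1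
      calc C i (μI i ∪ {s}) = C i ((μI i ∪ {s}) ∪ μI i) := by
              rw [Finset.union_comm (μI i) ({s} : Finset S), Finset.union_assoc,
                Finset.union_self, Finset.union_comm ({s} : Finset S) (μI i)]
        _ = C i (C i (μI i ∪ {s}) ∪ μI i) := hpi i _ _
        _ = C i (μI i) := by rw [h2]
        _ = μI i := hIR i
  have main : ∀ D : Finset S, (∀ s ∈ D, C i (μI i ∪ {s}) = μI i) →
      C i (μI i ∪ D) = μI i := by
    intro D
    induction D using Finset.induction_on with
    | empty => intro _; rw [Finset.union_empty, hIR]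
    | @insert s D hnd ih =>
      intro h
      have hs : C i (μI i ∪ {s}) = μI i := h s (Finset.mem_insert_self s D)
      have hD : C i (μI i ∪ D) = μI i := ih fun t ht => h t (Finset.mem_insert_of_mem ht)
      have e1 : μI i ∪ insert s D = (μI i ∪ D) ∪ {s} := by
        ext x; simp [Finset.mem_insert, Finset.mem_union]
      rw [e1, hpi i _ _, hD, hs]
  exact (main (μpI i) key).symm
end

section
/- Let C be a path-independent choice function, and let μᵗ(i), μᵗ⁻¹(i), ..., μᵏ(i) ⊆ S be a chain with μᵗ(i) ⪰^B ... ⪰^B μᵏ(i) in the Blair order. If s ∈ C(μᵗ⁻¹(i) ∪ {s}), then s ∈ C(μᵏ(i) ∪ {s}). -/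
-- Substitutability follows from path independence:
-- if s is chosen from A and s ∈ B ⊆ A, then s is chosen from B.
lemma pi_substitutable {S : Type*} [DecidableEq S]
    (C : Finset S → Finset S) (hC : ∀ A, C A ⊆ A)
    (hpi : ∀ A B, C (A ∪ B) = C (C A ∪ B))
    {A B : Finset S} (hBA : B ⊆ A) {s : S} (hsB : s ∈ B) (hsA : s ∈ C A) :
    s ∈ C B := by
  have hU : A = B ∪ (A \ B) := by
    rw [Finset.union_sdiff_of_subset hBA]
  have h1 : C A = C (C B ∪ (A \ B)) := by
    conv_lhs => rw [hU]
    exact hpi B (A \ B)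
  have h2 : s ∈ C B ∪ (A \ B) := hC _ (h1 ▸ hsA)
  rcases Finset.mem_union.mp h2 with h | h
  · exact h
  · exact absurd (Finset.mem_sdiff.mp h).2 (not_not_intro hsB)

-- One Blair step: if X = C(X ∪ Y) and s ∈ C(X ∪ {s}), then s ∈ C(Y ∪ {s}).
lemma blair_step {S : Type*} [DecidableEq S]
    (C : Finset S → Finset S) (hC : ∀ A, C A ⊆ A)
    (hpi : ∀ A B, C (A ∪ B) = C (C A ∪ B))
    {X Y : Finset S} (hXY : X = C (X ∪ Y)) {s : S}
    (hs : s ∈ C (X ∪ {s})) : s ∈ C (Y ∪ {s}) := by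
  have h1 : C (X ∪ Y ∪ {s}) = C (X ∪ {s}) := by
    rw [hpi (X ∪ Y) {s}, ← hXY]
  have h2 : s ∈ C (X ∪ Y ∪ {s}) := h1 ▸ hs
  exact pi_substitutable C hC hpi
    (by intro x hx; rcases Finset.mem_union.mp hx with h | h
        · exact Finset.mem_union_left _ (Finset.mem_union_right _ h)
        · exact Finset.mem_union_right _ h)
    (Finset.mem_union_right _ (Finset.mem_singleton_self s)) h2

theorem blair_chain_propagation {S : Type*} [Fintype S] [DecidableEq S]
    (C : Finset S → Finset S) (hC : ∀ A, C A ⊆ A)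
    (hpi : ∀ A B, C (A ∪ B) = C (C A ∪ B))
    (μ : ℕ → Finset S) (k t : ℕ) (hkt : k ≤ t)
    (hchain : ∀ n, k ≤ n → n < t → μ (n + 1) = C (μ (n + 1) ∪ μ n))
    (s : S) (hs : s ∈ C (μ t ∪ {s})) :
    s ∈ C (μ k ∪ {s}) := by
  have key : ∀ n, k ≤ n → n ≤ t → s ∈ C (μ n ∪ {s}) → s ∈ C (μ k ∪ {s}) := by
    intro n
    induction n with
    | zero =>
      intro h1 _ h3
      have : k = 0 := Nat.le_zero.mp h1
      simpa [this] using h3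
    | succ n ih =>
      intro h1 h2 h3
      rcases Nat.lt_or_ge k (n + 1) with hk | hk
      · have hkn : k ≤ n := Nat.lt_succ_iff.mp hk
        have hnt : n < t := Nat.lt_of_lt_of_le (Nat.lt_succ_self n) h2
        have hstep := blair_step C hC hpi (hchain n hkn hnt) h3
        exact ih hkn (Nat.le_of_lt hnt) hstep
      · have : k = n + 1 := Nat.le_antisymm h1 hk
        simpa [this] using h3
  exact key t hkt le_rfl hs
end
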